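/- arXiv:2206.02006 — 7 statements merged into one kernel-verified Lean document; each statement's English description precedes it below -/
import Mathlib

section
/- Let d be a positive integer and let x ∈ ℝ^d satisfy x_i ≤ 0 for every i. If g : ℝ → ℝ is convex, then the set function F : 𝒫({1,…,d}) → ℝ defined by F(A) = g(∑_{i∈A} x_i) (i.e., F(A) = g(⟨w, x⟩) where w ∈ {0,1}^d is the indicator vector of A) is supermodular. -/
/-- A set function on subsets of `Fin d` is submodular when it has diminishing returns. -/
def IsSubmodular {d : ℕ} (F : Finset (Fin d) → ℝ) : Prop :=
  ∀ B A : Finset (Fin d), B ⊆ A → ∀ i ∉ A,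
    F (insert i B) - F B ≥ F (insert i A) - F A

/-- A set function is supermodular when the reverse inequality always holds. -/
def IsSupermodular {d : ℕ} (F : Finset (Fin d) → ℝ) : Prop :=
  ∀ B A : Finset (Fin d), B ⊆ A → ∀ i ∉ A,
    F (insert i B) - F B ≤ F (insert i A) - F A

/-!
Adding the element `i` shifts the argument of `g` by `x i ≤ 0`, and the larger set `A` has the
smaller sum. So supermodularity says that the increments of `g` over a fixed step are monotone in
the base point, which holds for every convex function.
-/

theorem ConvexOn.map_add_sub_le_map_add_sub {𝕜 : Type*} [Field 𝕜] [LinearOrder 𝕜]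
    [IsStrictOrderedRing 𝕜] {s : Set 𝕜} {f : 𝕜 → 𝕜} (hf : ConvexOn 𝕜 s f) {a b h : 𝕜}
    (ha : a ∈ s) (hbh : b + h ∈ s) (hab : a ≤ b) (hh : 0 ≤ h) :
    f (a + h) - f a ≤ f (b + h) - f b := by
  rcases hh.eq_or_lt with rfl | hpos
  · simp
  have hD : 0 < b - a + h := by linarith
  -- `a + h` and `b` split `[a, b + h]` with mirrored weights, so their values sum to at most
  -- `f a + f (b + h)`.
  set p := (b - a) / (b - a + h) with hp_def
  set q := h / (b - a + h) with hq_def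
  have hp : 0 ≤ p := div_nonneg (sub_nonneg.2 hab) hD.le
  have hq : 0 ≤ q := div_nonneg hpos.le hD.le
  have hpq : p + q = 1 := by rw [hp_def, hq_def]; field_simp
  have hleft := hf.2 ha hbh hp hq hpq
  have hright := hf.2 ha hbh hq hp (by rw [add_comm, hpq])
  have e₁ : p • a + q • (b + h) = a + h := by
    simp only [hp_def, hq_def, smul_eq_mul]; field_simp; ring
  have e₂ : q • a + p • (b + h) = b := by
    simp only [hp_def, hq_def, smul_eq_mul]; field_simp; ring
  rw [e₁] at hleft
  rw [e₂] at hright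
  simp only [smul_eq_mul] at hleft hright
  linear_combination hleft + hright + (f a + f (b + h)) * hpq

theorem convex_comp_nonpos_modular_sum_supermodular_general
    (d : ℕ) (x : Fin d → ℝ) (hx : ∀ i, x i ≤ 0)
    (g : ℝ → ℝ) (hg : ConvexOn ℝ Set.univ g) :
    IsSupermodular (fun A : Finset (Fin d) => g (∑ i ∈ A, x i)) := by
  intro B A hBA i hiA
  have hiB : i ∉ B := fun hiB => hiA (hBA hiB)
  have hsum : ∑ j ∈ A, x j ≤ ∑ j ∈ B, x j := Finset.sum_anti_set_of_nonpos' hx hBA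
  have hinc := hg.map_add_sub_le_map_add_sub (Set.mem_univ _) (Set.mem_univ _)
    (add_le_add_left hsum (x i)) (neg_nonneg.2 (hx i))
  simp only [Finset.sum_insert hiA, Finset.sum_insert hiB, add_comm (x i)]
  simp only [add_neg_cancel_right] at hinc
  linarith

theorem convex_comp_nonpos_modular_sum_supermodular
    (d : ℕ) (hd : 0 < d) (x : Fin d → ℝ) (hx : ∀ i, x i ≤ 0)
    (g : ℝ → ℝ) (hg : ConvexOn ℝ Set.univ g) :
    IsSupermodular (fun A : Finset (Fin d) => g (∑ i ∈ A, x i)) :=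
  convex_comp_nonpos_modular_sum_supermodular_general d x hx g hg
end

section
/- Let d be a positive integer, let α < β be real numbers, and let x ∈ ℝ^d satisfy either x_i ≥ 0 for every i or x_i ≤ 0 for every i. If g : ℝ → ℝ is convex, then the set function F : 𝒫({1,…,d}) → ℝ defined by F(B) = g(α ∑_{j∉B} x_j + β ∑_{k∈B} x_k) (i.e., F(B) = g(⟨w, x⟩) where w ∈ {α,β}^d has w_i = β exactly for i ∈ B) is supermodular. -/
/-!
Writing `T = ∑ⱼ xⱼ`, the argument of `g` is `α T + ∑_{k ∈ B} (β - α) x_k`: a constant plus a sum of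
terms `yₖ = (β - α) xₖ` that all have the same sign. Adding `i` to `B` or to `A ⊇ B` shifts the
argument by the same amount `yᵢ`, starting from points whose difference `∑_{A \ B} y` has the sign
of `yᵢ`. So supermodularity reduces to the fact that the increments `g (t + c) - g t` of a convex
function grow with `t` in the direction of `c`, which in turn is the two-point majorization
inequality `g a + g b ≤ g p + g q` for `p ≤ a, b ≤ q` with `a + b = p + q`.
-/

open Finset

section Convex

variable {𝕜 : Type*} [Field 𝕜] [LinearOrder 𝕜] [IsStrictOrderedRing 𝕜] {s : Set 𝕜} {f : 𝕜 → 𝕜}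

theorem ConvexOn.map_add_map_le_of_add_eq (hf : ConvexOn 𝕜 s f) {p q a b : 𝕜}
    (hp : p ∈ s) (hq : q ∈ s) (hpa : p ≤ a) (haq : a ≤ q) (hab : a + b = p + q) :
    f a + f b ≤ f p + f q := by
  rcases hpa.trans haq |>.eq_or_lt with rfl | hpq
  · obtain rfl : a = p := le_antisymm haq hpa
    obtain rfl : b = a := by linarith
    rfl
  -- `a` and `b` are the convex combinations of `p` and `q` with swapped weights.
  set μ := (a - p) / (q - p)
  have hqp : 0 < q - p := sub_pos.2 hpq
  have hμ₀ : 0 ≤ μ := div_nonneg (sub_nonneg.2 hpa) hqp.le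
  have hμ₁ : μ ≤ 1 := (div_le_one hqp).2 (by linarith)
  have hμ : μ * (q - p) = a - p := div_mul_cancel₀ _ hqp.ne'
  have ha : (1 - μ) * p + μ * q = a := by linear_combination hμ
  have hb : μ * p + (1 - μ) * q = b := by linear_combination -hab - hμ
  have hfa := hf.2 hp hq (sub_nonneg.2 hμ₁) hμ₀ (sub_add_cancel 1 μ)
  have hfb := hf.2 hp hq hμ₀ (sub_nonneg.2 hμ₁) (add_sub_cancel μ 1)
  simp only [smul_eq_mul, ha, hb] at hfa hfb
  linarith

theorem ConvexOn.map_add_sub_map_le (hf : ConvexOn 𝕜 Set.univ f) {t u c : 𝕜}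
    (h : 0 ≤ c * (u - t)) : f (t + c) - f t ≤ f (u + c) - f u := by
  rcases lt_trichotomy c 0 with hc | rfl | hc
  · have hut : u ≤ t := sub_nonpos.1 (nonpos_of_mul_nonneg_right h hc)
    have := hf.map_add_map_le_of_add_eq (Set.mem_univ (u + c)) (Set.mem_univ t)
      (a := t + c) (b := u) (by linarith) (by linarith) (by ring)
    linarith
  · simp
  · have htu : t ≤ u := sub_nonneg.1 (nonneg_of_mul_nonneg_right h hc)
    have := hf.map_add_map_le_of_add_eq (Set.mem_univ t) (Set.mem_univ (u + c))
      (a := t + c) (b := u) (by linarith) (by linarith) (by ring)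
    linarith

end Convex

theorem isSupermodular_convex_comp_add_sum {d : ℕ} {g : ℝ → ℝ} (hg : ConvexOn ℝ Set.univ g)
    (a : ℝ) {y : Fin d → ℝ} (hy : (∀ i, 0 ≤ y i) ∨ (∀ i, y i ≤ 0)) :
    IsSupermodular (fun B : Finset (Fin d) => g (a + ∑ k ∈ B, y k)) := by
  intro B A hBA i hiA
  have hiB : i ∉ B := fun h => hiA (hBA h)
  have hdiff : (a + ∑ k ∈ A, y k) - (a + ∑ k ∈ B, y k) = ∑ k ∈ A \ B, y k := by
    rw [sum_sdiff_eq_sub hBA]; ring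
  have hsign : 0 ≤ y i * ((a + ∑ k ∈ A, y k) - (a + ∑ k ∈ B, y k)) := by
    rw [hdiff]
    rcases hy with hy | hy
    · exact mul_nonneg (hy i) (sum_nonneg fun k _ => hy k)
    · exact mul_nonneg_of_nonpos_of_nonpos (hy i) (sum_nonpos fun k _ => hy k)
  simpa only [sum_insert hiB, sum_insert hiA, add_comm (y i), add_assoc] using
    hg.map_add_sub_map_le hsign

theorem convex_alphabeta_weights_supermodular_general
    (d : ℕ) (α β : ℝ) (hαβ : α < β)
    (x : Fin d → ℝ) (hx : (∀ i, 0 ≤ x i) ∨ (∀ i, x i ≤ 0))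
    (g : ℝ → ℝ) (hg : ConvexOn ℝ Set.univ g) :
    IsSupermodular (fun B : Finset (Fin d) =>
      g (α * ∑ j ∈ Bᶜ, x j + β * ∑ k ∈ B, x k)) := by
  have hweights : ∀ B : Finset (Fin d), α * ∑ j ∈ Bᶜ, x j + β * ∑ k ∈ B, x k
      = α * ∑ j, x j + ∑ k ∈ B, (β - α) * x k := by
    intro B
    rw [← mul_sum, ← sum_compl_add_sum B]
    ring
  simp only [hweights]
  have hβα : 0 ≤ β - α := sub_nonneg.2 hαβ.le
  refine isSupermodular_convex_comp_add_sum hg _ ?_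
  rcases hx with hx | hx
  · exact Or.inl fun i => mul_nonneg hβα (hx i)
  · exact Or.inr fun i => mul_nonpos_of_nonneg_of_nonpos hβα (hx i)

theorem convex_alphabeta_weights_supermodular
    (d : ℕ) (hd : 0 < d) (α β : ℝ) (hαβ : α < β)
    (x : Fin d → ℝ) (hx : (∀ i, 0 ≤ x i) ∨ (∀ i, x i ≤ 0))
    (g : ℝ → ℝ) (hg : ConvexOn ℝ Set.univ g) :
    IsSupermodular (fun B : Finset (Fin d) =>
      g (α * ∑ j ∈ Bᶜ, x j + β * ∑ k ∈ B, x k)) :=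
  convex_alphabeta_weights_supermodular_general d α β hαβ x hx g hg
end

section
/- Let ℓ : ℝ → ℝ be a convex function satisfying ℓ(t) ≥ [t ≤ 0] for all t ∈ ℝ (where [·] is the Iverson bracket, equal to 1 if the condition holds and 0 otherwise). Then for every d, every x ∈ ℝ^d, every w ∈ ℝ^d, and every y ∈ {−1, +1}, it holds that (ℓ(y⟨w, pos(x)⟩) + ℓ(y⟨w, neg(x)⟩))/2 ≥ [y⟨w, x⟩ ≤ 0]. -/
/-!
The split margins `y⟨w, pos x⟩` and `y⟨w, neg x⟩` add up to the margin `y⟨w, x⟩`, so their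
midpoint is half of it and has the same sign. Convexity bounds `ℓ` at that midpoint by the
average of the two losses, and `ℓ` dominates the 0-1 loss there.
-/

open Finset

noncomputable def zeroOneLoss (t : ℝ) : ℝ := if t ≤ 0 then 1 else 0

lemma zeroOneLoss_div_of_pos {c : ℝ} (hc : 0 < c) (t : ℝ) :
    zeroOneLoss (t / c) = zeroOneLoss t := by
  simp only [zeroOneLoss, div_le_iff₀ hc, zero_mul]

lemma ConvexOn.map_add_div_two_le {s : Set ℝ} {f : ℝ → ℝ} (hf : ConvexOn ℝ s f)
    {a b : ℝ} (ha : a ∈ s) (hb : b ∈ s) : f ((a + b) / 2) ≤ (f a + f b) / 2 := by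
  calc f ((a + b) / 2) = f ((1 / 2 : ℝ) • a + (1 / 2 : ℝ) • b) := by
        rw [smul_eq_mul, smul_eq_mul, ← mul_add, one_div_mul_eq_div]
    _ ≤ (1 / 2 : ℝ) • f a + (1 / 2 : ℝ) • f b :=
        hf.2 ha hb (by norm_num) (by norm_num) (by norm_num)
    _ = (f a + f b) / 2 := by rw [smul_eq_mul, smul_eq_mul]; ring

lemma zeroOneLoss_add_le_add_div_two {ℓ : ℝ → ℝ} (hℓ : ConvexOn ℝ Set.univ ℓ)
    (hub : ∀ t, zeroOneLoss t ≤ ℓ t) (a b : ℝ) :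
    zeroOneLoss (a + b) ≤ (ℓ a + ℓ b) / 2 :=
  calc zeroOneLoss (a + b) = zeroOneLoss ((a + b) / 2) :=
        (zeroOneLoss_div_of_pos two_pos _).symm
    _ ≤ ℓ ((a + b) / 2) := hub _
    _ ≤ (ℓ a + ℓ b) / 2 := hℓ.map_add_div_two_le (Set.mem_univ a) (Set.mem_univ b)

lemma max_zero_add_neg_max_zero_neg {α : Type*} [AddGroup α] [LinearOrder α]
    [AddLeftMono α] (a : α) : max 0 a + -max 0 (-a) = a := by
  rw [← sub_eq_add_neg, max_comm, max_comm 0, max_zero_sub_max_neg_zero_eq_self]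

lemma sum_mul_max_zero_add_sum_mul_neg_max_zero_neg {ι : Type*} (s : Finset ι) (w x : ι → ℝ) :
    ∑ i ∈ s, w i * max 0 (x i) + ∑ i ∈ s, w i * -max 0 (-x i) = ∑ i ∈ s, w i * x i := by
  simp only [← sum_add_distrib, ← mul_add, max_zero_add_neg_max_zero_neg]

theorem posneg_split_upper_bounds_zero_one_loss_general
    (ℓ : ℝ → ℝ) (hℓ : ConvexOn ℝ Set.univ ℓ)
    (hub : ∀ t : ℝ, ℓ t ≥ if t ≤ 0 then (1 : ℝ) else 0)
    (d : ℕ) (x w : Fin d → ℝ) (y : ℝ) :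
    (ℓ (y * ∑ i, w i * max 0 (x i)) + ℓ (y * ∑ i, w i * (-(max 0 (-(x i)))))) / 2
      ≥ if y * ∑ i, w i * x i ≤ 0 then (1 : ℝ) else 0 := by
  have h := zeroOneLoss_add_le_add_div_two hℓ hub (y * ∑ i, w i * max 0 (x i))
    (y * ∑ i, w i * -max 0 (-x i))
  rwa [← mul_add, sum_mul_max_zero_add_sum_mul_neg_max_zero_neg] at h

theorem posneg_split_upper_bounds_zero_one_loss
    (ℓ : ℝ → ℝ) (hℓ : ConvexOn ℝ Set.univ ℓ)
    (hub : ∀ t : ℝ, ℓ t ≥ if t ≤ 0 then (1 : ℝ) else 0)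
    (d : ℕ) (x w : Fin d → ℝ) (y : ℝ) (hy : y = -1 ∨ y = 1) :
    (ℓ (y * ∑ i, w i * max 0 (x i)) + ℓ (y * ∑ i, w i * (-(max 0 (-(x i)))))) / 2
      ≥ if y * ∑ i, w i * x i ≤ 0 then (1 : ℝ) else 0 :=
  posneg_split_upper_bounds_zero_one_loss_general ℓ hℓ hub d x w y
end

section
/- Let ℓ : ℝ → ℝ be a convex function, let d be a positive integer, x ∈ ℝ^d, and y ∈ {−1, +1}. Then the set function F : 𝒫({1,…,d}) → ℝ defined by F(A) = (ℓ(y ∑_{i∈A} pos(x)_i) + ℓ(y ∑_{i∈A} neg(x)_i))/2 (i.e., F(A) = (ℓ(y⟨w, pos(x)⟩) + ℓ(y⟨w, neg(x)⟩))/2 where w ∈ {0,1}^d is the indicator vector of A) is supermodular. -/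
/-!
A convex function has nondecreasing increments: for a fixed step `h ≥ 0`, `ℓ (s + h) - ℓ s` is
monotone in `s`. All weights `y pos(x)_j` have the sign of `y`, so adding `i` moves the partial
sum over `A ⊇ B` by the same step as the one over `B`, starting further out in that direction;
hence its increment is the larger one. The same holds for the `neg(x)` part with the opposite
sign, and supermodularity is preserved by sums and by halving.
-/

namespace ConvexOn

variable {ℓ : ℝ → ℝ} {h : ℝ}

/-- The points `a + h` and `b` split `[a, b + h]` with mirrored convex weights, so adding the two
convexity inequalities gives `ℓ (a + h) + ℓ b ≤ ℓ a + ℓ (b + h)`. -/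
theorem monotone_add_sub (hℓ : ConvexOn ℝ Set.univ ℓ) (hh : 0 ≤ h) :
    Monotone fun s => ℓ (s + h) - ℓ s := by
  intro a b hab
  rcases (add_nonneg (sub_nonneg.mpr hab) hh).eq_or_lt with hlen | hlen
  · obtain rfl : h = 0 := by linarith
    simp
  set t := h / (b - a + h)
  have ht₀ : 0 ≤ t := div_nonneg hh hlen.le
  have ht₁ : t ≤ 1 := div_le_one_of_le₀ (by linarith) hlen.le
  have hleft : (1 - t) * a + t * (b + h) = a + h := by
    simp only [t]; field_simp; ring
  have hright : t * a + (1 - t) * (b + h) = b := by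
    simp only [t]; field_simp; ring
  have h₁ : ℓ (a + h) ≤ (1 - t) * ℓ a + t * ℓ (b + h) := by
    simpa only [smul_eq_mul, hleft] using
      hℓ.2 (Set.mem_univ a) (Set.mem_univ (b + h)) (sub_nonneg.mpr ht₁) ht₀
        (sub_add_cancel 1 t)
  have h₂ : ℓ b ≤ t * ℓ a + (1 - t) * ℓ (b + h) := by
    simpa only [smul_eq_mul, hright] using
      hℓ.2 (Set.mem_univ a) (Set.mem_univ (b + h)) ht₀ (sub_nonneg.mpr ht₁)
        (add_sub_cancel t 1)
  dsimp only
  linarith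

theorem antitone_add_sub (hℓ : ConvexOn ℝ Set.univ ℓ) (hh : h ≤ 0) :
    Antitone fun s => ℓ (s + h) - ℓ s := by
  intro a b hab
  have := hℓ.monotone_add_sub (neg_nonneg.mpr hh) (show a + h ≤ b + h by linarith)
  simp only [add_neg_cancel_right] at this
  dsimp only
  linarith

end ConvexOn

theorem IsSupermodular.add {d : ℕ} {F G : Finset (Fin d) → ℝ} (hF : IsSupermodular F)
    (hG : IsSupermodular G) : IsSupermodular (F + G) := by
  intro B A hBA i hi
  have := add_le_add (hF B A hBA i hi) (hG B A hBA i hi)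
  simp only [Pi.add_apply]
  linarith

theorem IsSupermodular.div_const {d : ℕ} {F : Finset (Fin d) → ℝ} (hF : IsSupermodular F)
    {c : ℝ} (hc : 0 ≤ c) : IsSupermodular fun A => F A / c := by
  intro B A hBA i hi
  rw [← sub_div, ← sub_div]
  exact div_le_div_of_nonneg_right (hF B A hBA i hi) hc

section ConvexOfSum

variable {ℓ : ℝ → ℝ} {d : ℕ} {w : Fin d → ℝ}

theorem isSupermodular_convex_comp_sum_of_nonneg (hℓ : ConvexOn ℝ Set.univ ℓ)
    (hw : ∀ i, 0 ≤ w i) : IsSupermodular fun A => ℓ (∑ i ∈ A, w i) := by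
  intro B A hBA i hi
  dsimp only
  rw [Finset.sum_insert hi, Finset.sum_insert (Finset.notMem_mono hBA hi), add_comm (w i),
    add_comm (w i)]
  exact hℓ.monotone_add_sub (hw i) (Finset.sum_mono_set_of_nonneg hw hBA)

theorem isSupermodular_convex_comp_sum_of_nonpos (hℓ : ConvexOn ℝ Set.univ ℓ)
    (hw : ∀ i, w i ≤ 0) : IsSupermodular fun A => ℓ (∑ i ∈ A, w i) := by
  intro B A hBA i hi
  dsimp only
  rw [Finset.sum_insert hi, Finset.sum_insert (Finset.notMem_mono hBA hi), add_comm (w i),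
    add_comm (w i)]
  exact hℓ.antitone_add_sub (hw i) (Finset.sum_anti_set_of_nonpos' hw hBA)

end ConvexOfSum

theorem posneg_split_loss_supermodular_general
    (ℓ : ℝ → ℝ) (hℓ : ConvexOn ℝ Set.univ ℓ)
    (d : ℕ) (x : Fin d → ℝ) (y : ℝ) :
    IsSupermodular (fun A : Finset (Fin d) =>
      (ℓ (y * ∑ i ∈ A, max 0 (x i)) + ℓ (y * ∑ i ∈ A, -(max 0 (-(x i))))) / 2) := by
  simp_rw [Finset.mul_sum]
  have hpos : ∀ i, 0 ≤ max 0 (x i) := fun i => le_max_left _ _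
  have hneg : ∀ i, -(max 0 (-(x i))) ≤ 0 := fun i => neg_nonpos.mpr (le_max_left _ _)
  refine IsSupermodular.div_const (IsSupermodular.add ?_ ?_) zero_le_two
  all_goals rcases le_total 0 y with hy | hy
  · exact isSupermodular_convex_comp_sum_of_nonneg hℓ fun i => mul_nonneg hy (hpos i)
  · exact isSupermodular_convex_comp_sum_of_nonpos hℓ fun i =>
      mul_nonpos_of_nonpos_of_nonneg hy (hpos i)
  · exact isSupermodular_convex_comp_sum_of_nonpos hℓ fun i =>
      mul_nonpos_of_nonneg_of_nonpos hy (hneg i)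
  · exact isSupermodular_convex_comp_sum_of_nonneg hℓ fun i =>
      mul_nonneg_of_nonpos_of_nonpos hy (hneg i)

theorem posneg_split_loss_supermodular
    (ℓ : ℝ → ℝ) (hℓ : ConvexOn ℝ Set.univ ℓ)
    (d : ℕ) (hd : 0 < d) (x : Fin d → ℝ) (y : ℝ) (hy : y = -1 ∨ y = 1) :
    IsSupermodular (fun A : Finset (Fin d) =>
      (ℓ (y * ∑ i ∈ A, max 0 (x i)) + ℓ (y * ∑ i ∈ A, -(max 0 (-(x i))))) / 2) :=
  posneg_split_loss_supermodular_general ℓ hℓ d x y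
end

section
/- Let n, d be positive integers, let α < β be real numbers, let x₁, …, xₙ ∈ ℝ^d each satisfy x_i ≥ 0 elementwise, and let y₁, …, yₙ ∈ {−1, +1}. Then the empirical logistic loss, viewed as the set function L : 𝒫({1,…,d}) → ℝ defined by L(S) = ∑_{i=1}^n log(1 + exp(−y_i ⟨w, x_i⟩)), where w ∈ {α,β}^d has w_j = β exactly for j ∈ S and w_j = α otherwise, is supermodular. -/
/-!
Each summand is `t ↦ log (1 + exp t)` (convex, its derivative being the sigmoid) composed with the
linear map `t ↦ -yᵢ t` and with `S ↦ ⟨w_S, xᵢ⟩`. Since `xᵢ ≥ 0` and `α < β`, the latter is monotone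
in `S` and adding `j` to `S` always adds the same amount `(β - α) xᵢⱼ ≥ 0`. A convex function of such a
set function is supermodular, because the increments `φ (t + δ) - φ t` of a convex `φ` increase with
`t`; and sums of supermodular functions are supermodular.
-/

open Real Finset Set

lemma ConvexOn.add_sub_le_add_sub {f : ℝ → ℝ} (hf : ConvexOn ℝ univ f) {a c δ : ℝ}
    (hac : a ≤ c) (hδ : 0 ≤ δ) : f (a + δ) - f a ≤ f (c + δ) - f c := by
  rcases hδ.eq_or_lt with rfl | hδ
  · simp
  have hL : 0 < c + δ - a := by linarith
  -- slope on `[a, a + δ]` ≤ slope on `[a, c + δ]` ≤ slope on `[c, c + δ]`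
  have h₁ := hf.secant_mono (mem_univ a) (mem_univ (a + δ)) (mem_univ (c + δ))
    (by linarith) (by linarith) (by linarith)
  have h₂ := hf.secant_mono (mem_univ (c + δ)) (mem_univ a) (mem_univ c)
    (by linarith) (by linarith) hac
  rw [add_sub_cancel_left, div_le_div_iff₀ hδ hL] at h₁
  rw [← neg_div_neg_eq, ← neg_div_neg_eq (f c - _)] at h₂
  simp only [neg_sub, add_sub_cancel_left] at h₂
  rw [div_le_div_iff₀ hL hδ] at h₂
  nlinarith

lemma hasDerivAt_log_one_add_exp (t : ℝ) :
    HasDerivAt (fun t => log (1 + exp t)) (sigmoid t) t := by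
  convert ((hasDerivAt_exp t).const_add 1).log (by positivity) using 1
  rw [sigmoid_def, exp_neg]
  field_simp
  ring

lemma convexOn_log_one_add_exp : ConvexOn ℝ univ (fun t => log (1 + exp t)) := by
  refine Monotone.convexOn_univ_of_deriv
    (fun t => (hasDerivAt_log_one_add_exp t).differentiableAt) ?_
  rw [funext fun t => (hasDerivAt_log_one_add_exp t).deriv]
  exact sigmoid_monotone

section SetFunction

variable {d : ℕ}

lemma IsSupermodular.sum {ι : Type*} (s : Finset ι) {F : ι → Finset (Fin d) → ℝ}
    (hF : ∀ k ∈ s, IsSupermodular (F k)) : IsSupermodular (fun S => ∑ k ∈ s, F k S) := by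
  intro B A hBA i hi
  rw [← sum_sub_distrib, ← sum_sub_distrib]
  exact sum_le_sum fun k hk => hF k hk B A hBA i hi

lemma ConvexOn.isSupermodular_comp {φ : ℝ → ℝ} (hφ : ConvexOn ℝ univ φ)
    {g : Finset (Fin d) → ℝ} {c : Fin d → ℝ} (hg : Monotone g)
    (hg_insert : ∀ S i, i ∉ S → g (insert i S) = g S + c i) :
    IsSupermodular (fun S => φ (g S)) := by
  intro B A hBA i hi
  have hc : 0 ≤ c i := by
    have := hg (Finset.subset_insert i ∅)
    rw [hg_insert ∅ i (Finset.notMem_empty i)] at this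
    linarith
  change φ (g (insert i B)) - φ (g B) ≤ φ (g (insert i A)) - φ (g A)
  rw [hg_insert B i fun h => hi (hBA h), hg_insert A i hi]
  exact hφ.add_sub_le_add_sub (hg hBA) hc

end SetFunction

section WeightedSum

variable {ι : Type*} [Fintype ι] [DecidableEq ι] {α β : ℝ} {v : ι → ℝ}

lemma monotone_sum_ite_mul (hαβ : α ≤ β) (hv : ∀ j, 0 ≤ v j) :
    Monotone (fun S : Finset ι => ∑ j, (if j ∈ S then β else α) * v j) := by
  intro B A hBA
  refine sum_le_sum fun j _ => mul_le_mul_of_nonneg_right ?_ (hv j)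
  by_cases hjB : j ∈ B
  · simp [hjB, hBA hjB]
  · split_ifs <;> simp [hαβ]

lemma sum_ite_insert_mul {S : Finset ι} {i : ι} (hi : i ∉ S) :
    ∑ j, (if j ∈ insert i S then β else α) * v j
      = ∑ j, (if j ∈ S then β else α) * v j + (β - α) * v i := by
  have hterm : ∀ j, (if j ∈ insert i S then β else α) * v j
      = (if j ∈ S then β else α) * v j + if i = j then (β - α) * v j else 0 := by
    intro j
    rcases eq_or_ne i j with rfl | hj
    · rw [if_pos (mem_insert_self i S), if_neg hi, if_pos rfl]
      ring
    · simp [hj, Ne.symm hj]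
  rw [sum_congr rfl fun j _ => hterm j, sum_add_distrib, sum_ite_eq]
  simp

end WeightedSum

theorem logistic_empirical_risk_supermodular_general
    (n d : ℕ) (α β : ℝ) (hαβ : α < β)
    (x : Fin n → Fin d → ℝ) (hx : ∀ i j, 0 ≤ x i j)
    (y : Fin n → ℝ) :
    IsSupermodular (fun S : Finset (Fin d) =>
      ∑ i, Real.log (1 + Real.exp (-(y i) * ∑ j, (if j ∈ S then β else α) * x i j))) := by
  refine IsSupermodular.sum univ fun i _ => ?_
  have hconvex : ConvexOn ℝ univ (fun t => log (1 + exp (-(y i) * t))) :=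
    convexOn_log_one_add_exp.comp_linearMap (LinearMap.mul ℝ ℝ (-(y i)))
  exact hconvex.isSupermodular_comp (monotone_sum_ite_mul hαβ.le (hx i))
    fun _ _ hj => sum_ite_insert_mul hj

theorem logistic_empirical_risk_supermodular
    (n d : ℕ) (hn : 0 < n) (hd : 0 < d) (α β : ℝ) (hαβ : α < β)
    (x : Fin n → Fin d → ℝ) (hx : ∀ i j, 0 ≤ x i j)
    (y : Fin n → ℝ) (hy : ∀ i, y i = -1 ∨ y i = 1) :
    IsSupermodular (fun S : Finset (Fin d) =>
      ∑ i, Real.log (1 + Real.exp (-(y i) * ∑ j, (if j ∈ S then β else α) * x i j))) :=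
  logistic_empirical_risk_supermodular_general n d α β hαβ x hx y
end

section
/- Let g : ℝ → ℝ be convex, let d be a positive integer, and let x ∈ ℝ^d satisfy either x_i ≥ 0 for every i or x_i ≤ 0 for every i. Fix w₂ ∈ {0,1}^d. Then the set function F : 𝒫({1,…,d}) → ℝ defined by F(A) = (g(⟨w₁, 2x⟩) + g(⟨w₂, −2x⟩))/2, where w₁ ∈ {0,1}^d is the indicator vector of A, is supermodular; symmetrically, for fixed w₁ ∈ {0,1}^d, the set function A ↦ (g(⟨w₁, 2x⟩) + g(⟨w₂, −2x⟩))/2, where w₂ is the indicator vector of A, is supermodular. -/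
open Finset

theorem ConvexOn.increment_le_increment {𝕜 : Type*} [Field 𝕜] [LinearOrder 𝕜]
    [IsStrictOrderedRing 𝕜] {s : Set 𝕜} {f : 𝕜 → 𝕜} (hf : ConvexOn 𝕜 s f) {a b t : 𝕜}
    (ha : a ∈ s) (hbt : b + t ∈ s) (hab : a ≤ b) (ht : 0 ≤ t) :
    f (a + t) - f a ≤ f (b + t) - f b := by
  rcases hab.eq_or_lt with rfl | hab
  · rfl
  rcases ht.eq_or_lt with rfl | ht
  · simp
  -- both `a + t` and `b` lie strictly between `a` and `b + t`, with mirrored weights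
  have h₁ := hf.secant_mono_aux1 ha hbt (lt_add_of_pos_right a ht) (by linarith)
  have h₂ := hf.secant_mono_aux1 ha hbt hab (lt_add_of_pos_right b ht)
  have hlen : 0 < b + t - a := by linarith
  nlinarith

theorem isSupermodular_comp_sum {d : ℕ} {g : ℝ → ℝ} (hg : ConvexOn ℝ Set.univ g)
    {c : Fin d → ℝ} (hc : (∀ i, 0 ≤ c i) ∨ (∀ i, c i ≤ 0)) :
    IsSupermodular fun A => g (∑ j ∈ A, c j) := by
  intro B A hBA i hiA
  dsimp only
  rw [sum_insert (notMem_mono hBA hiA), sum_insert hiA, add_comm (c i), add_comm (c i)]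
  rcases hc with hc | hc
  · exact hg.increment_le_increment trivial trivial (sum_mono_set_of_nonneg hc hBA) (hc i)
  · have := hg.increment_le_increment (a := ∑ j ∈ A, c j + c i) (b := ∑ j ∈ B, c j + c i)
      (t := -c i) trivial trivial (by linarith [sum_anti_set_of_nonpos' hc hBA])
      (by linarith [hc i])
    simp only [add_neg_cancel_right] at this
    linarith

theorem ternary_split_supermodular_in_each_argument_general
    (g : ℝ → ℝ) (hg : ConvexOn ℝ Set.univ g)
    (d : ℕ) (x : Fin d → ℝ)
    (hx : (∀ i, 0 ≤ x i) ∨ (∀ i, x i ≤ 0)) :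
    (∀ w₂ : Fin d → ℝ, (∀ i, w₂ i = 0 ∨ w₂ i = 1) →
      IsSupermodular (fun A : Finset (Fin d) =>
        (g (∑ i ∈ A, 2 * x i) + g (∑ i, w₂ i * (-2 * x i))) / 2)) ∧
    (∀ w₁ : Fin d → ℝ, (∀ i, w₁ i = 0 ∨ w₁ i = 1) →
      IsSupermodular (fun A : Finset (Fin d) =>
        (g (∑ i, w₁ i * (2 * x i)) + g (∑ i ∈ A, -2 * x i)) / 2)) := by
  have hpos : IsSupermodular fun A => g (∑ i ∈ A, 2 * x i) :=
    isSupermodular_comp_sum hg <|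
      hx.imp (fun h i => by linarith [h i]) (fun h i => by linarith [h i])
  have hneg : IsSupermodular fun A => g (∑ i ∈ A, -2 * x i) :=
    isSupermodular_comp_sum hg <|
      hx.symm.imp (fun h i => by linarith [h i]) (fun h i => by linarith [h i])
  refine ⟨fun w₂ _ B A hBA i hiA => ?_, fun w₁ _ B A hBA i hiA => ?_⟩
  · linarith [hpos B A hBA i hiA]
  · linarith [hneg B A hBA i hiA]

theorem ternary_split_supermodular_in_each_argument
    (g : ℝ → ℝ) (hg : ConvexOn ℝ Set.univ g)
    (d : ℕ) (hd : 0 < d) (x : Fin d → ℝ)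
    (hx : (∀ i, 0 ≤ x i) ∨ (∀ i, x i ≤ 0)) :
    (∀ w₂ : Fin d → ℝ, (∀ i, w₂ i = 0 ∨ w₂ i = 1) →
      IsSupermodular (fun A : Finset (Fin d) =>
        (g (∑ i ∈ A, 2 * x i) + g (∑ i, w₂ i * (-2 * x i))) / 2)) ∧
    (∀ w₁ : Fin d → ℝ, (∀ i, w₁ i = 0 ∨ w₁ i = 1) →
      IsSupermodular (fun A : Finset (Fin d) =>
        (g (∑ i, w₁ i * (2 * x i)) + g (∑ i ∈ A, -2 * x i)) / 2)) :=
  ternary_split_supermodular_in_each_argument_general g hg d x hx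
end

section
/- Let g : ℝ → ℝ be strictly convex, let d ≥ 2, and let x ∈ ℝ^d have two distinct indices i ≠ j with x_i > 0 and x_j < 0. Then the set function F : 𝒫({1,…,d}) → ℝ defined by F(A) = g(∑_{k∈A} x_k) is not supermodular; specifically, g(x_i + x_j) − g(x_j) < g(x_i) − g(0), violating the supermodular inequality for element i with B = ∅ and A = {j}. Consequently, if x additionally has two positive entries, F is neither submodular nor supermodular. -/
/-!
For `x i > 0 > x j` the points `x i + x j` and `0` lie strictly between `x j` and `x i` and have
the same sum as these, so strict convexity gives `g (x i + x j) + g 0 < g (x i) + g (x j)`,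
contradicting supermodularity of `A ↦ g (∑ k ∈ A, x k)` at `B = ∅`, `A = {j}`. Likewise for
`x k, x l > 0` the points `x k, x l` lie strictly between `0` and `x k + x l`, so
`g (x k) + g (x l) < g (x k + x l) + g 0`, contradicting submodularity at `B = ∅`, `A = {l}`.
-/

open Finset

theorem StrictConvexOn.add_lt_add_of_mem_Ioo {s : Set ℝ} {f : ℝ → ℝ}
    (hf : StrictConvexOn ℝ s f) {a b p q : ℝ} (ha : a ∈ s) (hb : b ∈ s) (hp : p ∈ Set.Ioo a b)
    (hpq : p + q = a + b) : f p + f q < f a + f b := by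
  obtain ⟨hap, hpb⟩ := hp
  have hab : a < b := hap.trans hpb
  have hba : 0 < b - a := sub_pos.2 hab
  -- `p` and `q` are the convex combinations of `a, b` with swapped weights `μ, 1 - μ`.
  set μ := (b - p) / (b - a)
  have hμ : 0 < μ := div_pos (by linarith) hba
  have hμ' : 0 < 1 - μ := by rw [sub_pos, div_lt_one hba]; linarith
  have hp_eq : μ • a + (1 - μ) • b = p := by
    simp only [μ, smul_eq_mul]
    field_simp [hba.ne']
    ring
  have hq_eq : (1 - μ) • a + μ • b = q := by
    simp only [μ, smul_eq_mul]
    field_simp [hba.ne']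
    linear_combination (a - b) * hpq
  have h₁ := hf.2 ha hb hab.ne hμ hμ' (add_sub_cancel μ 1)
  have h₂ := hf.2 ha hb hab.ne hμ' hμ (sub_add_cancel 1 μ)
  rw [hp_eq] at h₁
  rw [hq_eq] at h₂
  simp only [smul_eq_mul] at h₁ h₂
  linarith

section SetFunction

variable {d : ℕ} {F : Finset (Fin d) → ℝ} {i j : Fin d}

theorem IsSupermodular.sub_le_sub_pair (hF : IsSupermodular F) (hij : i ≠ j) :
    F {i} - F ∅ ≤ F {i, j} - F {j} := by
  simpa using hF ∅ {j} (empty_subset _) i (by simpa using hij)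

theorem IsSubmodular.sub_le_sub_pair (hF : IsSubmodular F) (hij : i ≠ j) :
    F {i, j} - F {j} ≤ F {i} - F ∅ := by
  simpa using hF ∅ {j} (empty_subset _) i (by simpa using hij)

end SetFunction

theorem strict_convex_mixed_entries_not_supermodular_general
    (g : ℝ → ℝ) (hg : StrictConvexOn ℝ Set.univ g)
    (d : ℕ) (x : Fin d → ℝ)
    (i j : Fin d) (hij : i ≠ j) (hxi : 0 < x i) (hxj : x j < 0) :
    ¬ IsSupermodular (fun A : Finset (Fin d) => g (∑ k ∈ A, x k)) ∧
      g (x i + x j) - g (x j) < g (x i) - g 0 ∧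
      ((∃ k l : Fin d, k ≠ l ∧ 0 < x k ∧ 0 < x l) →
        ¬ IsSubmodular (fun A : Finset (Fin d) => g (∑ k ∈ A, x k)) ∧
        ¬ IsSupermodular (fun A : Finset (Fin d) => g (∑ k ∈ A, x k))) := by
  have hmixed : g (x i + x j) + g 0 < g (x j) + g (x i) :=
    hg.add_lt_add_of_mem_Ioo trivial trivial ⟨by linarith, by linarith⟩ (by ring)
  have hnsup : ¬ IsSupermodular (fun A : Finset (Fin d) => g (∑ k ∈ A, x k)) := fun h => by
    have := h.sub_le_sub_pair hij
    simp only [sum_singleton, sum_empty, sum_pair hij] at this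
    linarith
  refine ⟨hnsup, by linarith, fun ⟨k, l, hkl, hxk, hxl⟩ => ⟨fun h => ?_, hnsup⟩⟩
  have hpos : g (x k) + g (x l) < g 0 + g (x k + x l) :=
    hg.add_lt_add_of_mem_Ioo trivial trivial ⟨hxk, by linarith⟩ (by ring)
  have := h.sub_le_sub_pair hkl
  simp only [sum_singleton, sum_empty, sum_pair hkl] at this
  linarith

theorem strict_convex_mixed_entries_not_supermodular
    (g : ℝ → ℝ) (hg : StrictConvexOn ℝ Set.univ g)
    (d : ℕ) (hd : 2 ≤ d) (x : Fin d → ℝ)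
    (i j : Fin d) (hij : i ≠ j) (hxi : 0 < x i) (hxj : x j < 0) :
    ¬ IsSupermodular (fun A : Finset (Fin d) => g (∑ k ∈ A, x k)) ∧
      g (x i + x j) - g (x j) < g (x i) - g 0 ∧
      ((∃ k l : Fin d, k ≠ l ∧ 0 < x k ∧ 0 < x l) →
        ¬ IsSubmodular (fun A : Finset (Fin d) => g (∑ k ∈ A, x k)) ∧
        ¬ IsSupermodular (fun A : Finset (Fin d) => g (∑ k ∈ A, x k))) :=
  strict_convex_mixed_entries_not_supermodular_general g hg d x i j hij hxi hxj
end
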